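/- For every a > 0, the function f(r) = (2 ln(a + √(a² + r²)) − ln(r²)) / (π² √(a² + r²)) for r ≠ 0 is a probability density function on ℝ: it is nonnegative and its integral over ℝ equals 1. -/

import Mathlib

/-!
The density is even in `r`, so it suffices to integrate over `r > 0`. The half-angle
substitution `r = 2 a x / (1 - x²)` (i.e. `r = a tan θ`, `x = tan (θ / 2)`) gives
`√(a² + r²) = a (1 + x²) / (1 - x²)` and `r = x (a + √(a² + r²))`, so the numerator becomes
`-2 log x` and the density turns into `(4 / π²) (-log x) / (1 - x²) dx` on `(0, 1)`. Expanding
`1 / (1 - x²)` geometrically and using `∫₀¹ (-log x) x ^ s dx = 1 / (s + 1)²` (substitute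
`x = exp (-t)`), this integral equals `(4 / π²) ∑ 1 / (2k + 1)² = (4 / π²) (π² / 8) = 1 / 2`.
Nonnegativity is `|r| < a + √(a² + r²)`.
-/

open MeasureTheory Real Set

theorem hasSum_one_div_odd_sq :
    HasSum (fun k : ℕ => 1 / (2 * (k : ℝ) + 1) ^ 2) (π ^ 2 / 8) := by
  have hzeta := hasSum_zeta_two
  have heven : HasSum (fun k : ℕ => 1 / ((2 * k : ℕ) : ℝ) ^ 2) (π ^ 2 / 24) := by
    have h := hzeta.div_const 4
    rw [show π ^ 2 / 6 / 4 = π ^ 2 / 24 by ring] at h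
    refine h.congr_fun fun k => ?_
    push_cast
    ring
  have hodd : Summable (fun k : ℕ => 1 / ((2 * k + 1 : ℕ) : ℝ) ^ 2) :=
    hzeta.summable.comp_injective fun m n h => by simpa using h
  have hval : ∑' k : ℕ, 1 / ((2 * k + 1 : ℕ) : ℝ) ^ 2 = π ^ 2 / 8 := by
    have htotal := HasSum.even_add_odd (f := fun n : ℕ => 1 / (n : ℝ) ^ 2) heven hodd.hasSum
    linarith [htotal.unique hzeta]
  rw [← hval]
  exact_mod_cast hodd.hasSum

theorem image_exp_neg_Ioi_zero : (fun t : ℝ => exp (-t)) '' Ioi 0 = Ioo 0 1 := by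
  ext x
  simp only [mem_image, mem_Ioi, mem_Ioo]
  constructor
  · rintro ⟨t, ht, rfl⟩
    exact ⟨exp_pos _, exp_lt_one_iff.2 (neg_lt_zero.2 ht)⟩
  · rintro ⟨hx0, hx1⟩
    exact ⟨-log x, neg_pos.2 (log_neg hx0 hx1), by rw [neg_neg, exp_log hx0]⟩

theorem setIntegral_Ioo_zero_one_eq_integral_comp_exp_neg {E : Type*} [NormedAddCommGroup E]
    [NormedSpace ℝ E] (g : ℝ → E) :
    ∫ x in Ioo 0 1, g x = ∫ t in Ioi 0, exp (-t) • g (exp (-t)) := by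
  have hderiv : ∀ t ∈ Ioi (0 : ℝ),
      HasDerivWithinAt (fun t => exp (-t)) (-exp (-t)) (Ioi 0) t := fun t _ =>
    by simpa using ((hasDerivAt_neg t).exp).hasDerivWithinAt
  have hinj : InjOn (fun t : ℝ => exp (-t)) (Ioi 0) := (exp_injective.comp neg_injective).injOn
  rw [← image_exp_neg_Ioi_zero,
    integral_image_eq_integral_abs_deriv_smul measurableSet_Ioi hderiv hinj]
  simp_rw [abs_neg, abs_of_pos (exp_pos _)]

section NegLogMulRpow

variable {s : ℝ}

theorem integral_neg_log_mul_rpow (hs : -1 < s) :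
    ∫ x in Ioo 0 1, -log x * x ^ s = 1 / (s + 1) ^ 2 := by
  have hgamma := integral_rpow_mul_exp_neg_mul_Ioi two_pos (by linarith : 0 < s + 1)
  rw [show (2 : ℝ) - 1 = 1 by norm_num, Gamma_two, mul_one, rpow_two, one_div_pow] at hgamma
  rw [setIntegral_Ioo_zero_one_eq_integral_comp_exp_neg, ← hgamma]
  refine setIntegral_congr_fun measurableSet_Ioi fun t _ => ?_
  rw [smul_eq_mul, log_exp, neg_neg, rpow_one, ← exp_mul, mul_left_comm, ← exp_add]
  ring_nf

theorem integrableOn_neg_log_mul_rpow (hs : -1 < s) :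
    IntegrableOn (fun x => -log x * x ^ s) (Ioo 0 1) :=
  Integrable.of_integral_ne_zero <| by
    rw [integral_neg_log_mul_rpow hs]
    have : 0 < s + 1 := by linarith
    positivity

end NegLogMulRpow

theorem integral_neg_log_div_one_sub_sq :
    ∫ x in Ioo 0 1, -log x / (1 - x ^ 2) = π ^ 2 / 8 := by
  set F : ℕ → ℝ → ℝ := fun k x => -log x * x ^ (2 * k)
  have hs (k : ℕ) : -1 < ((2 * k : ℕ) : ℝ) := by linarith [(2 * k).cast_nonneg (α := ℝ)]
  have hF_int (k : ℕ) : IntegrableOn (F k) (Ioo 0 1) := by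
    simpa only [F, rpow_natCast] using integrableOn_neg_log_mul_rpow (hs k)
  have hF_integral (k : ℕ) : ∫ x in Ioo 0 1, F k x = 1 / (2 * k + 1) ^ 2 := by
    have h := integral_neg_log_mul_rpow (hs k)
    simp only [rpow_natCast] at h
    exact_mod_cast h
  have hF_norm (k : ℕ) : ∫ x in Ioo 0 1, ‖F k x‖ = ∫ x in Ioo 0 1, F k x :=
    setIntegral_congr_fun measurableSet_Ioo fun x hx => Real.norm_of_nonneg <|
      mul_nonneg (neg_nonneg.2 (log_nonpos hx.1.le hx.2.le)) (pow_nonneg hx.1.le _)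
  have hseries : EqOn (fun x => -log x / (1 - x ^ 2)) (fun x => ∑' k, F k x) (Ioo 0 1) := by
    intro x hx
    have hx2 : x ^ 2 < 1 := by nlinarith [hx.1, hx.2]
    simp only [F, pow_mul, tsum_mul_left, tsum_geometric_of_lt_one (sq_nonneg x) hx2,
      div_eq_mul_inv]
  have hsum := hasSum_integral_of_summable_integral_norm hF_int <| by
    simpa only [hF_norm, hF_integral] using hasSum_one_div_odd_sq.summable
  rw [setIntegral_congr_fun measurableSet_Ioo hseries]
  simp only [hF_integral] at hsum
  exact hsum.unique hasSum_one_div_odd_sq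

noncomputable def cauchyCorrDensity (a r : ℝ) : ℝ :=
  (2 * log (a + √(a ^ 2 + r ^ 2)) - log (r ^ 2)) / (π ^ 2 * √(a ^ 2 + r ^ 2))

section Density

variable {a r : ℝ}

theorem log_sq_le_two_mul_log_add_sqrt (ha : 0 ≤ a) (hr : r ≠ 0) :
    log (r ^ 2) ≤ 2 * log (a + √(a ^ 2 + r ^ 2)) := by
  have habs : |r| ≤ a + √(a ^ 2 + r ^ 2) := by
    rw [← sqrt_sq_eq_abs]
    linarith [sqrt_le_sqrt (le_add_of_nonneg_left (sq_nonneg a) : r ^ 2 ≤ a ^ 2 + r ^ 2)]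
  have h := log_le_log (by positivity) (pow_le_pow_left₀ (abs_nonneg r) habs 2)
  simpa only [sq_abs, log_pow, Nat.cast_ofNat] using h

theorem cauchyCorrDensity_nonneg (ha : 0 ≤ a) (hr : r ≠ 0) : 0 ≤ cauchyCorrDensity a r :=
  div_nonneg (sub_nonneg.2 (log_sq_le_two_mul_log_add_sqrt ha hr)) (by positivity)

theorem cauchyCorrDensity_abs : cauchyCorrDensity a |r| = cauchyCorrDensity a r := by
  simp only [cauchyCorrDensity, sq_abs]

end Density

noncomputable def halfAngleSubst (a x : ℝ) : ℝ := 2 * a * x / (1 - x ^ 2)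

section HalfAngleSubst

variable {a x : ℝ}

theorem image_halfAngleSubst_Ioo (ha : 0 < a) : halfAngleSubst a '' Ioo 0 1 = Ioi 0 := by
  ext r
  simp only [mem_image, mem_Ioo, mem_Ioi, halfAngleSubst]
  constructor
  · rintro ⟨x, ⟨hx0, hx1⟩, rfl⟩
    have : 0 < 1 - x ^ 2 := by nlinarith
    positivity
  · intro hr
    set s := √(a ^ 2 + r ^ 2)
    have hs2 : s ^ 2 = a ^ 2 + r ^ 2 := sq_sqrt (by positivity)
    have has : a < s := (lt_sqrt ha.le).2 (by nlinarith)
    have hsr : s < r + a := (sqrt_lt' (by linarith)).2 (by nlinarith)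
    refine ⟨(s - a) / r, ⟨div_pos (by linarith) hr, (div_lt_one hr).2 (by linarith)⟩, ?_⟩
    have h1 : 1 - ((s - a) / r) ^ 2 = 2 * a * (s - a) / r ^ 2 := by
      field_simp
      nlinarith
    rw [h1]
    field_simp [(by linarith : s - a ≠ 0)]

theorem injOn_halfAngleSubst (ha : a ≠ 0) : InjOn (halfAngleSubst a) (Ioo 0 1) := by
  intro x hx y hy h
  have hx2 : 1 - x ^ 2 ≠ 0 := by nlinarith [hx.1, hx.2]
  have hy2 : 1 - y ^ 2 ≠ 0 := by nlinarith [hy.1, hy.2]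
  rw [halfAngleSubst, halfAngleSubst, div_eq_div_iff hx2 hy2] at h
  have h' : 2 * a * ((x - y) * (1 + x * y)) = 0 := by linear_combination h
  have hxy : 0 < 1 + x * y := by nlinarith [hx.1, hy.1]
  simpa [ha, hxy.ne', sub_eq_zero] using h'

theorem hasDerivAt_halfAngleSubst (hx : 1 - x ^ 2 ≠ 0) :
    HasDerivAt (halfAngleSubst a) (2 * a * (1 + x ^ 2) / (1 - x ^ 2) ^ 2) x := by
  have hnum : HasDerivAt (fun x => 2 * a * x) (2 * a) x := by
    simpa using (hasDerivAt_id x).const_mul (2 * a)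
  have hden : HasDerivAt (fun x => 1 - x ^ 2) (-(2 * x)) x := by
    simpa using (hasDerivAt_pow 2 x).const_sub 1
  refine (hnum.div hden hx).congr_deriv ?_
  ring

theorem sqrt_sq_add_halfAngleSubst_sq (ha : 0 ≤ a) (hx : x ^ 2 < 1) :
    √(a ^ 2 + halfAngleSubst a x ^ 2) = a * (1 + x ^ 2) / (1 - x ^ 2) := by
  have hx2 : 0 < 1 - x ^ 2 := by linarith
  rw [halfAngleSubst, show a ^ 2 + (2 * a * x / (1 - x ^ 2)) ^ 2
    = (a * (1 + x ^ 2) / (1 - x ^ 2)) ^ 2 by field_simp; ring]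
  exact sqrt_sq (by positivity)

end HalfAngleSubst

section Integral

variable {a : ℝ}

theorem abs_deriv_halfAngleSubst_smul_cauchyCorrDensity (ha : 0 < a) {x : ℝ}
    (hx : x ∈ Ioo 0 1) :
    |2 * a * (1 + x ^ 2) / (1 - x ^ 2) ^ 2| • cauchyCorrDensity a (halfAngleSubst a x)
      = 4 / π ^ 2 * (-log x / (1 - x ^ 2)) := by
  obtain ⟨hx0, hx1⟩ := hx
  have hx2 : 0 < 1 - x ^ 2 := by nlinarith
  have hsqrt := sqrt_sq_add_halfAngleSubst_sq ha.le (by linarith : x ^ 2 < 1)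
  have hsum : a + a * (1 + x ^ 2) / (1 - x ^ 2) = 2 * a / (1 - x ^ 2) := by field_simp; ring
  have hsubst : halfAngleSubst a x = x * (2 * a / (1 - x ^ 2)) := by
    rw [halfAngleSubst]; ring
  have hnum : 2 * log (a + √(a ^ 2 + halfAngleSubst a x ^ 2)) - log (halfAngleSubst a x ^ 2)
      = -2 * log x := by
    rw [hsqrt, hsum, log_pow, hsubst, log_mul hx0.ne' (by positivity)]
    push_cast
    ring
  rw [cauchyCorrDensity, hnum, hsqrt, abs_of_pos (by positivity), smul_eq_mul]
  field_simp
  ring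

theorem integral_Ioi_cauchyCorrDensity (ha : 0 < a) :
    ∫ r in Ioi 0, cauchyCorrDensity a r = 1 / 2 := by
  have hderiv (x : ℝ) (hx : x ∈ Ioo (0 : ℝ) 1) : HasDerivWithinAt (halfAngleSubst a)
      (2 * a * (1 + x ^ 2) / (1 - x ^ 2) ^ 2) (Ioo 0 1) x :=
    (hasDerivAt_halfAngleSubst (by nlinarith [hx.1, hx.2])).hasDerivWithinAt
  rw [← image_halfAngleSubst_Ioo ha, integral_image_eq_integral_abs_deriv_smul measurableSet_Ioo
      hderiv (injOn_halfAngleSubst ha.ne'),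
    setIntegral_congr_fun measurableSet_Ioo
      fun x hx => abs_deriv_halfAngleSubst_smul_cauchyCorrDensity ha hx,
    integral_const_mul, integral_neg_log_div_one_sub_sq]
  field_simp
  ring

theorem integral_cauchyCorrDensity (ha : 0 < a) : ∫ r, cauchyCorrDensity a r = 1 := by
  have h := integral_comp_abs (f := cauchyCorrDensity a)
  simp only [cauchyCorrDensity_abs, integral_Ioi_cauchyCorrDensity ha] at h
  rw [h]
  norm_num

end Integral

/-- For `a > 0`, `f(r) = (2 ln(a + √(a²+r²)) − ln(r²))/(π² √(a²+r²))` is a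
probability density on ℝ. -/
theorem stmt_12 (a : ℝ) (ha : 0 < a) :
    (∀ r : ℝ, r ≠ 0 →
        0 ≤ (2 * Real.log (a + Real.sqrt (a ^ 2 + r ^ 2)) - Real.log (r ^ 2)) /
              (π ^ 2 * Real.sqrt (a ^ 2 + r ^ 2))) ∧
      ∫ r : ℝ, (2 * Real.log (a + Real.sqrt (a ^ 2 + r ^ 2)) - Real.log (r ^ 2)) /
          (π ^ 2 * Real.sqrt (a ^ 2 + r ^ 2)) = 1 :=
  ⟨fun _ hr => cauchyCorrDensity_nonneg ha.le hr, integral_cauchyCorrDensity ha⟩
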